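/- Let L ∈ ℝ^{M×M} be a symmetric positive semidefinite matrix whose kernel has dimension at least ξ + 1, let v_1, …, v_ξ be orthonormal vectors in the kernel of L, and let α_1, …, α_ξ be positive scalars. Then the matrix R = L + Σ_{i=1}^{ξ} α_i v_i v_iᵀ is singular (0 is an eigenvalue of R), and consequently there exists a symmetric positive definite matrix Q ∈ ℝ^{M×M} for which no symmetric matrix P satisfies P R + Rᵀ P = Q. -/

import Mathlib

open Matrix

/-
The shift `∑ i, α i • v i (v i)ᵀ` only acts on the span of the `v i`. Since the kernel of `L`
has dimension greater than `ξ`, it contains a nonzero `w` orthogonal to all `v i`, and then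
`L w = 0` and `v i ⬝ᵥ w = 0` give `R w = 0`. For every `P`, the quadratic form of `P R + Rᵀ P`
vanishes at `w`, so `P R + Rᵀ P` is never positive definite; take `Q = 1`.
-/

theorem Submodule.exists_ne_zero_forall_dotProduct_eq_zero {K n ι : Type*} [Field K]
    [Fintype n] [Fintype ι] (W : Submodule K (n → K)) (v : ι → n → K)
    (hcard : Fintype.card ι < Module.finrank K W) :
    ∃ w ∈ W, w ≠ 0 ∧ ∀ i, v i ⬝ᵥ w = 0 := by
  have hker : LinearMap.ker ((of v).mulVecLin ∘ₗ W.subtype) ≠ ⊥ :=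
    LinearMap.ker_ne_bot_of_finrank_lt (by rwa [Module.finrank_fintype_fun_eq_card])
  obtain ⟨⟨w, hwW⟩, hw, hw0⟩ := (Submodule.ne_bot_iff _).mp hker
  exact ⟨w, hwW, fun h => hw0 (by simp [h]), fun i => congrFun hw i⟩

theorem Matrix.sum_smul_vecMulVec_mulVec_eq_zero {R n ι : Type*} [CommRing R]
    [Fintype n] [Fintype ι] (α : ι → R) (u v : ι → n → R) {w : n → R}
    (hw : ∀ i, v i ⬝ᵥ w = 0) :
    (∑ i, α i • vecMulVec (u i) (v i)) *ᵥ w = 0 := by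
  simp [sum_mulVec, smul_mulVec, vecMulVec_mulVec, hw]

theorem Matrix.dotProduct_mul_add_transpose_mul_mulVec_self_eq_zero {R n : Type*}
    [CommRing R] [Fintype n] (P A : Matrix n n R) {w : n → R} (hw : A *ᵥ w = 0) :
    w ⬝ᵥ ((P * A + Aᵀ * P) *ᵥ w) = 0 := by
  rw [add_mulVec, dotProduct_add, ← mulVec_mulVec, hw, ← mulVec_mulVec,
    dotProduct_mulVec w Aᵀ, vecMul_transpose, hw]
  simp

theorem Matrix.not_posDef_mul_add_transpose_mul {R n : Type*} [CommRing R] [PartialOrder R]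
    [StarRing R] [TrivialStar R] [Fintype n] (P A : Matrix n n R) {w : n → R} (hw0 : w ≠ 0)
    (hw : A *ᵥ w = 0) :
    ¬ (P * A + Aᵀ * P).PosDef := fun hpos => by
  simpa [dotProduct_mul_add_transpose_mul_mulVec_self_eq_zero P A hw] using
    hpos.dotProduct_mulVec_pos hw0

theorem shifted_psd_matrix_singular_no_lyapunov
    (M ξ : ℕ) (L : Matrix (Fin M) (Fin M) ℝ)
    (hdim : ξ + 1 ≤ Module.finrank ℝ (LinearMap.ker L.mulVecLin))
    (v : Fin ξ → Fin M → ℝ)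
    (α : Fin ξ → ℝ) :
    (∃ w : Fin M → ℝ, w ≠ 0 ∧ (L + ∑ i, α i • vecMulVec (v i) (v i)) *ᵥ w = 0) ∧
    (∃ Q : Matrix (Fin M) (Fin M) ℝ, Q.IsSymm ∧ Q.PosDef ∧
      ∀ P : Matrix (Fin M) (Fin M) ℝ, P.IsSymm →
        P * (L + ∑ i, α i • vecMulVec (v i) (v i)) +
          (L + ∑ i, α i • vecMulVec (v i) (v i))ᵀ * P ≠ Q) := by
  obtain ⟨w, hLw, hw0, hvw⟩ :=
    (LinearMap.ker L.mulVecLin).exists_ne_zero_forall_dotProduct_eq_zero v (by simpa using hdim)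
  have hRw : (L + ∑ i, α i • vecMulVec (v i) (v i)) *ᵥ w = 0 := by
    rw [add_mulVec, sum_smul_vecMulVec_mulVec_eq_zero α v v hvw, add_zero]
    exact hLw
  refine ⟨⟨w, hw0, hRw⟩, 1, isSymm_one, PosDef.one, fun P _ hPQ => ?_⟩
  exact not_posDef_mul_add_transpose_mul P _ hw0 hRw (hPQ ▸ PosDef.one)
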